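/- arXiv:1703.08101 — 2 statements merged into one kernel-verified Lean document; each statement's English description precedes it below -/
import Mathlib

section
/- For any measurable set X ⊆ ℂ and any 0 < ρ < R, the difference | A(S_R ∩ X)/A(S_R) − (1/A(S_R)) ∫_{S_R} A(S_ρ(z) ∩ X)/A(S_ρ) dA(z) | is at most C·ρ/R for some absolute constant C, where S_r(z) denotes the axis-parallel square of side length r centered at z and S_R = S_R(0). -/
/-! By Fubini, `∫_{S_R} A(S_ρ(z) ∩ X) dz = ∫_X A(S_ρ(x) ∩ S_R) dx`, because
`x ∈ S_ρ(z) ↔ z ∈ S_ρ(x)`. The new integrand `A(S_ρ(x) ∩ S_R)` equals `ρ² · 1_{S_R}(x)` unless `x`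
lies in the frame `S_{R+ρ} \ S_{R-ρ}` of area `4Rρ`, where both take values in `[0, ρ²]`. Hence the
two unnormalised quantities differ by at most `4Rρ³`, and dividing by `A(S_R) A(S_ρ) = R²ρ²` gives
the bound `4ρ/R`. -/

open MeasureTheory Complex

/-- The closed axis-parallel square of side length `ρ` centered at `z`. -/
def Sq (ρ : ℝ) (z : ℂ) : Set ℂ :=
  {w : ℂ | |w.re - z.re| ≤ ρ / 2 ∧ |w.im - z.im| ≤ ρ / 2}

open scoped ENNReal

theorem MeasureTheory.lintegral_measure_preimage_prodMk_comm {α β : Type*} [MeasurableSpace α]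
    [MeasurableSpace β] {μ : Measure α} {ν : Measure β} [SFinite μ] [SFinite ν]
    {r : Set (α × β)} (hr : MeasurableSet r) :
    ∫⁻ a, ν (Prod.mk a ⁻¹' r) ∂μ = ∫⁻ b, μ ((·, b) ⁻¹' r) ∂ν :=
  (Measure.prod_apply hr).symm.trans (Measure.prod_apply_symm hr)

theorem ENNReal.abs_toReal_sub_le {a b c : ℝ≥0∞} (hab : a ≤ b + c) (hba : b ≤ a + c)
    (hb : b ≠ ∞) (hc : c ≠ ∞) : |a.toReal - b.toReal| ≤ c.toReal := by
  have ha : a ≠ ∞ := ne_top_of_le_ne_top (ENNReal.add_ne_top.mpr ⟨hb, hc⟩) hab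
  have h₁ := ENNReal.toReal_le_add hab hb hc
  have h₂ := ENNReal.toReal_le_add hba ha hc
  rw [abs_sub_le_iff]
  constructor <;> linarith

theorem abs_toReal_lintegral_sub_le_of_eqOn_compl {α : Type*} [MeasurableSpace α]
    {μ : Measure α} {f g : α → ℝ≥0∞} {s : Set α} {c : ℝ≥0∞}
    (hs : MeasurableSet s) (hf : ∀ x, f x ≤ c) (hg : ∀ x, g x ≤ c) (hfg : Set.EqOn f g sᶜ)
    (hg_fin : ∫⁻ x, g x ∂μ ≠ ∞) (hcs : c * μ s ≠ ∞) :
    |(∫⁻ x, f x ∂μ).toReal - (∫⁻ x, g x ∂μ).toReal| ≤ (c * μ s).toReal := by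
  have key : ∀ {f g : α → ℝ≥0∞}, (∀ x, f x ≤ c) → Set.EqOn f g sᶜ →
      ∫⁻ x, f x ∂μ ≤ ∫⁻ x, g x ∂μ + c * μ s := fun {f g} hf hfg => by
    rw [← lintegral_indicator_const hs, ← lintegral_add_right _ (measurable_const.indicator hs)]
    refine lintegral_mono fun x => ?_
    by_cases hx : x ∈ s
    · simpa [hx] using le_add_left (hf x)
    · simp [hx, hfg hx]
  exact ENNReal.abs_toReal_sub_le (key hf hfg) (key hg hfg.symm) hg_fin hcs

namespace Sq

theorem eq_preimage (ρ : ℝ) (z : ℂ) :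
    Sq ρ z = measurableEquivRealProd ⁻¹'
      (Set.Icc (z.re - ρ / 2) (z.re + ρ / 2) ×ˢ Set.Icc (z.im - ρ / 2) (z.im + ρ / 2)) := by
  ext w
  simp only [Sq, Set.mem_ofPred_eq, Set.mem_preimage, Set.mem_prod, Set.mem_Icc,
    measurableEquivRealProd_apply, abs_le]
  constructor <;> rintro ⟨⟨_, _⟩, _, _⟩ <;>
    exact ⟨⟨by linarith, by linarith⟩, by linarith, by linarith⟩

theorem measurableSet (ρ : ℝ) (z : ℂ) : MeasurableSet (Sq ρ z) := by
  rw [eq_preimage]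
  exact measurableEquivRealProd.measurable (measurableSet_Icc.prod measurableSet_Icc)

theorem volume_eq {ρ : ℝ} (hρ : 0 ≤ ρ) (z : ℂ) : volume (Sq ρ z) = ENNReal.ofReal (ρ ^ 2) := by
  rw [eq_preimage, volume_preserving_equiv_real_prod.measure_preimage
      (measurableSet_Icc.prod measurableSet_Icc).nullMeasurableSet,
    Measure.volume_eq_prod, Measure.prod_prod, Real.volume_Icc, Real.volume_Icc,
    ← ENNReal.ofReal_mul (by linarith), sq]
  ring_nf

theorem mono {r r' : ℝ} (h : r ≤ r') (z : ℂ) : Sq r z ⊆ Sq r' z :=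
  fun _ ⟨h₁, h₂⟩ => ⟨by linarith, by linarith⟩

theorem mem_comm {ρ : ℝ} {z w : ℂ} : w ∈ Sq ρ z ↔ z ∈ Sq ρ w := by
  simp only [Sq, Set.mem_ofPred_eq, abs_sub_comm w.re, abs_sub_comm w.im]

theorem measurableSet_setOf_mem (ρ : ℝ) : MeasurableSet {p : ℂ × ℂ | p.2 ∈ Sq ρ p.1} :=
  (measurableSet_le (f := fun p : ℂ × ℂ => |p.2.re - p.1.re|) (by fun_prop) measurable_const).inter
    (measurableSet_le (f := fun p : ℂ × ℂ => |p.2.im - p.1.im|) (by fun_prop) measurable_const)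

theorem volume_diff {r r' : ℝ} (hr : 0 ≤ r) (h : r ≤ r') (z : ℂ) :
    volume (Sq r' z \ Sq r z) = ENNReal.ofReal (r' ^ 2 - r ^ 2) := by
  rw [measure_sdiff (mono h z) (measurableSet r z).nullMeasurableSet
      (by rw [volume_eq hr]; exact ENNReal.ofReal_ne_top),
    volume_eq (hr.trans h), volume_eq hr, ← ENNReal.ofReal_sub _ (sq_nonneg _)]

theorem subset_of_mem {ρ R : ℝ} {x z : ℂ} (hx : x ∈ Sq (R - ρ) z) : Sq ρ x ⊆ Sq R z := by
  obtain ⟨hx₁, hx₂⟩ := hx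
  rintro w ⟨h₁, h₂⟩
  exact ⟨(abs_sub_le _ x.re _).trans (by linarith), (abs_sub_le _ x.im _).trans (by linarith)⟩

theorem disjoint_of_notMem {ρ R : ℝ} {x z : ℂ} (hx : x ∉ Sq (R + ρ) z) :
    Disjoint (Sq ρ x) (Sq R z) := by
  refine Set.disjoint_left.mpr fun w ⟨h₁, h₂⟩ ⟨h₃, h₄⟩ => hx ⟨?_, ?_⟩
  · rw [abs_sub_comm] at h₁
    exact (abs_sub_le _ w.re _).trans (by linarith)
  · rw [abs_sub_comm] at h₂
    exact (abs_sub_le _ w.im _).trans (by linarith)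

end Sq

theorem measurable_volume_Sq_inter (ρ : ℝ) (X : Set ℂ) :
    Measurable fun z => volume (Sq ρ z ∩ X) := by
  convert measurable_measure_prodMk_left (ν := volume.restrict X) (Sq.measurableSet_setOf_mem ρ)
    using 2 with z
  exact (Measure.restrict_apply (Sq.measurableSet ρ z)).symm

theorem lintegral_volume_Sq_inter_comm (ρ : ℝ) (Y X : Set ℂ) :
    ∫⁻ z in Y, volume (Sq ρ z ∩ X) = ∫⁻ x in X, volume (Sq ρ x ∩ Y) := by
  calc ∫⁻ z in Y, volume (Sq ρ z ∩ X)
      = ∫⁻ z in Y, volume.restrict X (Prod.mk z ⁻¹' {p | p.2 ∈ Sq ρ p.1}) :=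
        lintegral_congr fun z => (Measure.restrict_apply (Sq.measurableSet ρ z)).symm
    _ = ∫⁻ x in X, volume.restrict Y ((·, x) ⁻¹' {p | p.2 ∈ Sq ρ p.1}) :=
        lintegral_measure_preimage_prodMk_comm (Sq.measurableSet_setOf_mem ρ)
    _ = ∫⁻ x in X, volume (Sq ρ x ∩ Y) := by
        refine lintegral_congr fun x => ?_
        rw [← Measure.restrict_apply (Sq.measurableSet ρ x)]
        congr 1
        ext z
        exact Sq.mem_comm

theorem volume_Sq_inter_eqOn_indicator {ρ : ℝ} (hρ : 0 ≤ ρ) (R : ℝ) (z : ℂ) :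
    Set.EqOn (fun x => volume (Sq ρ x ∩ Sq R z))
      ((Sq R z).indicator fun _ => ENNReal.ofReal (ρ ^ 2)) (Sq (R + ρ) z \ Sq (R - ρ) z)ᶜ := by
  intro x hx
  dsimp only
  by_cases hx_in : x ∈ Sq (R - ρ) z
  · rw [Set.indicator_of_mem (Sq.mono (by linarith) z hx_in),
      Set.inter_eq_left.mpr (Sq.subset_of_mem hx_in), Sq.volume_eq hρ]
  · have hx_out : x ∉ Sq (R + ρ) z := fun h => hx ⟨h, hx_in⟩
    rw [Set.indicator_of_notMem fun h => hx_out (Sq.mono (by linarith) z h),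
      (Sq.disjoint_of_notMem hx_out).inter_eq, measure_empty]

theorem abs_toReal_lintegral_volume_Sq_inter_sub_le {ρ R : ℝ} (hρ : 0 ≤ ρ) (hρR : ρ ≤ R)
    (X : Set ℂ) (z : ℂ) :
    |(∫⁻ x in X, volume (Sq ρ x ∩ Sq R z)).toReal - ρ ^ 2 * (volume (Sq R z ∩ X)).toReal|
      ≤ ρ ^ 2 * (4 * R * ρ) := by
  set c := ENNReal.ofReal (ρ ^ 2)
  set frame := Sq (R + ρ) z \ Sq (R - ρ) z
  have hframe : MeasurableSet frame := (Sq.measurableSet _ z).diff (Sq.measurableSet _ z)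
  have hinner : ∀ x, volume (Sq ρ x ∩ Sq R z) ≤ c := fun x =>
    (measure_mono Set.inter_subset_left).trans_eq (Sq.volume_eq hρ x)
  have hindicator : ∀ x, (Sq R z).indicator (fun _ => c) x ≤ c := fun x =>
    Set.indicator_le_self' (fun _ _ => zero_le) x
  have heq := volume_Sq_inter_eqOn_indicator hρ R z
  have hc : c ≠ ∞ := ENNReal.ofReal_ne_top
  have hSqX : volume (Sq R z ∩ X) ≠ ∞ :=
    ne_top_of_le_ne_top (by rw [Sq.volume_eq (hρ.trans hρR)]; exact ENNReal.ofReal_ne_top)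
      (measure_mono Set.inter_subset_left)
  have hvol_frame : volume frame = ENNReal.ofReal (4 * R * ρ) := by
    rw [Sq.volume_diff (by linarith) (by linarith)]
    ring_nf
  have hlintegral : ∫⁻ x in X, (Sq R z).indicator (fun _ => c) x = c * volume (Sq R z ∩ X) := by
    rw [lintegral_indicator_const (Sq.measurableSet R z), Measure.restrict_apply
      (Sq.measurableSet R z)]
  have hcs : c * volume.restrict X frame ≤ c * volume frame :=
    mul_le_mul_right (Measure.restrict_apply_le X frame) c
  have hcs_fin : c * volume frame ≠ ∞ := by
    rw [hvol_frame]; exact ENNReal.mul_ne_top hc ENNReal.ofReal_ne_top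
  have h := abs_toReal_lintegral_sub_le_of_eqOn_compl hframe hinner hindicator heq
    (by rw [hlintegral]; exact ENNReal.mul_ne_top hc hSqX) (ne_top_of_le_ne_top hcs_fin hcs)
  rw [hlintegral, ENNReal.toReal_mul, ENNReal.toReal_ofReal (sq_nonneg ρ)] at h
  calc _ ≤ _ := h
    _ ≤ (c * volume frame).toReal := ENNReal.toReal_mono hcs_fin hcs
    _ = ρ ^ 2 * (4 * R * ρ) := by
      rw [hvol_frame, ENNReal.toReal_mul, ENNReal.toReal_ofReal (sq_nonneg ρ),
        ENNReal.toReal_ofReal (by nlinarith)]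

theorem stmt1 :
    ∃ C > (0:ℝ), ∀ (X : Set ℂ), MeasurableSet X → ∀ ρ R : ℝ, 0 < ρ → ρ < R →
      |(volume (Sq R 0 ∩ X)).toReal / (volume (Sq R 0)).toReal -
        (volume (Sq R 0)).toReal⁻¹ *
          ∫ z in Sq R 0, (volume (Sq ρ z ∩ X)).toReal / (volume (Sq ρ 0)).toReal|
      ≤ C * ρ / R := by
  refine ⟨4, by norm_num, fun X _ ρ R hρ hρR => ?_⟩
  have hR : 0 < R := hρ.trans hρR
  have hfinite : ∀ z, volume (Sq ρ z ∩ X) < ∞ := fun z =>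
    (measure_mono Set.inter_subset_left).trans_lt
      (by rw [Sq.volume_eq hρ.le]; exact ENNReal.ofReal_lt_top)
  have hintegral : ∫ z in Sq R 0, (volume (Sq ρ z ∩ X)).toReal
      = (∫⁻ x in X, volume (Sq ρ x ∩ Sq R 0)).toReal := by
    rw [integral_toReal (measurable_volume_Sq_inter ρ X).aemeasurable (ae_of_all _ hfinite),
      lintegral_volume_Sq_inter_comm]
  have key := abs_toReal_lintegral_volume_Sq_inter_sub_le hρ.le hρR.le X 0
  rw [Sq.volume_eq hρ.le, Sq.volume_eq hR.le, ENNReal.toReal_ofReal (sq_nonneg ρ),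
    ENNReal.toReal_ofReal (sq_nonneg R), integral_div, hintegral]
  set A := (∫⁻ x in X, volume (Sq ρ x ∩ Sq R 0)).toReal
  set a := (volume (Sq R 0 ∩ X)).toReal
  rw [show a / R ^ 2 - (R ^ 2)⁻¹ * (A / ρ ^ 2) = -(A - ρ ^ 2 * a) / (R ^ 2 * ρ ^ 2) by
      field_simp; ring,
    abs_div, abs_neg, abs_of_pos (show 0 < R ^ 2 * ρ ^ 2 by positivity),
    div_le_iff₀ (by positivity)]
  calc _ ≤ ρ ^ 2 * (4 * R * ρ) := key
    _ = 4 * ρ / R * (R ^ 2 * ρ ^ 2) := by field_simp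
end

section
/- Let u be subharmonic on a neighborhood of the closed disk D of radius r centered at z₀, with u ≥ 0, u(z₀) = M > 0, and u ≤ b·M on D for some b with 1 < b < 4/3. Let 0 < c < 4 − 3b and set D* = {z ∈ D : u(z) ≥ c·M}. Then A(D*)/A(D) ≥ (1−c)/(b−c) > 3/4. -/
open MeasureTheory Metric Complex

/-!
Write `D* = {u ≥ cM}` inside the disk `D`. The sub-mean-value inequality gives
`M · |D| ≤ ∫_D u ≤ bM · |D*| + cM · |D \ D*|`, which rearranges to
`(1 - c) · |D| ≤ (b - c) · |D*|`; and `(1 - c)/(b - c) > 3/4` is just `3b + c < 4`.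
-/

section Density

variable {α : Type*} [MeasurableSpace α] {μ : Measure α} {f : α → ℝ} {D S : Set α} {B C : ℝ}

theorem setIntegral_le_of_le_on_subset_of_le_on_sdiff (hDm : MeasurableSet D)
    (hSm : MeasurableSet S) (hSD : S ⊆ D) (hD : μ D ≠ ⊤) (hf : IntegrableOn f D μ)
    (hB : ∀ x ∈ S, f x ≤ B) (hC : ∀ x ∈ D \ S, f x ≤ C) :
    ∫ x in D, f x ∂μ ≤ B * μ.real S + C * (μ.real D - μ.real S) := by
  have hIS : ∫ x in S, f x ∂μ ≤ B * μ.real S :=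
    calc ∫ x in S, f x ∂μ ≤ ∫ _ in S, B ∂μ :=
          setIntegral_mono_on (hf.mono_set hSD)
            (integrableOn_const (measure_ne_top_of_subset hSD hD)) hSm hB
      _ = B * μ.real S := by rw [setIntegral_const, smul_eq_mul, mul_comm]
  have hIDS : ∫ x in D \ S, f x ∂μ ≤ C * (μ.real D - μ.real S) :=
    calc ∫ x in D \ S, f x ∂μ ≤ ∫ _ in D \ S, C ∂μ :=
          setIntegral_mono_on (hf.mono_set Set.sdiff_subset)
            (integrableOn_const (measure_ne_top_of_subset Set.sdiff_subset hD))
            (hDm.diff hSm) hC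
      _ = C * (μ.real D - μ.real S) := by
          rw [setIntegral_const, smul_eq_mul, measureReal_sdiff hSD hSm hD, mul_comm]
  rw [← integral_inter_add_sdiff hSm hf, Set.inter_eq_self_of_subset_right hSD]
  linarith

theorem div_le_measureReal_superlevel_div (hDm : MeasurableSet D)
    (hSm : MeasurableSet {x ∈ D | C ≤ f x}) (hD₀ : μ D ≠ 0) (hDfin : μ D ≠ ⊤)
    (hf : IntegrableOn f D μ)
    {m : ℝ} (hm : m ≤ ⨍ x in D, f x ∂μ) (hB : ∀ x ∈ D, f x ≤ B) (hCB : C < B) :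
    (m - C) / (B - C) ≤ μ.real {x ∈ D | C ≤ f x} / μ.real D := by
  have hD : 0 < μ.real D := ENNReal.toReal_pos hD₀ hDfin
  have hint := setIntegral_le_of_le_on_subset_of_le_on_sdiff hDm hSm (fun x hx => hx.1) hDfin hf
    (fun x hx => hB x hx.1) (fun x hx => (not_le.1 fun h => hx.2 ⟨hx.1, h⟩).le)
  have hmD : m * μ.real D ≤ ∫ x in D, f x ∂μ := by
    rwa [setAverage_eq, smul_eq_mul, ← div_eq_inv_mul, le_div_iff₀ hD] at hm
  rw [div_le_div_iff₀ (sub_pos.2 hCB) hD]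
  linarith

end Density

theorem stmt5_general (u : ℂ → ℝ) (z₀ : ℂ) (r M b c : ℝ) (hr : 0 < r)
    (V : Set ℂ) (hDV : closedBall z₀ r ⊆ V)
    (hcont : ContinuousOn u V)
    (hsub : ∀ w ρ, 0 < ρ → closedBall w ρ ⊆ V → u w ≤ ⨍ x in closedBall w ρ, u x)
    (hM : u z₀ = M) (hM0 : 0 < M)
    (hb1 : 1 < b) (hub : ∀ w ∈ closedBall z₀ r, u w ≤ b * M)
    (hc : c < 4 - 3 * b) :
    (1 - c) / (b - c) ≤
      (volume {w ∈ closedBall z₀ r | c * M ≤ u w}).toReal /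
        (volume (closedBall z₀ r)).toReal
    ∧ (3 : ℝ) / 4 < (1 - c) / (b - c) := by
  have hcb : c < b := by linarith
  have hcontD : ContinuousOn u (closedBall z₀ r) := hcont.mono hDV
  have hdensity := div_le_measureReal_superlevel_div (μ := volume)
    isClosed_closedBall.measurableSet
    (hcontD.preimage_isClosed_of_isClosed isClosed_closedBall isClosed_Ici).measurableSet
    (measure_closedBall_pos _ z₀ hr).ne' measure_closedBall_lt_top.ne
    (hcontD.integrableOn_compact (isCompact_closedBall _ _))
    (hM ▸ hsub z₀ r hr hDV) hub (mul_lt_mul_of_pos_right hcb hM0)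
  have hratio : (M - c * M) / (b * M - c * M) = (1 - c) / (b - c) := by
    rw [← one_sub_mul, ← sub_mul, mul_div_mul_right _ _ hM0.ne']
  refine ⟨hratio ▸ hdensity, ?_⟩
  rw [div_lt_div_iff₀ (by norm_num) (sub_pos.2 hcb)]
  linarith

theorem stmt5 (u : ℂ → ℝ) (z₀ : ℂ) (r M b c : ℝ) (hr : 0 < r)
    (V : Set ℂ) (hV : IsOpen V) (hDV : closedBall z₀ r ⊆ V)
    (hcont : ContinuousOn u V)
    (hsub : ∀ w ρ, 0 < ρ → closedBall w ρ ⊆ V → u w ≤ ⨍ x in closedBall w ρ, u x)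
    (hnn : ∀ w ∈ V, 0 ≤ u w)
    (hM : u z₀ = M) (hM0 : 0 < M)
    (hb1 : 1 < b) (hb2 : b < 4 / 3) (hub : ∀ w ∈ closedBall z₀ r, u w ≤ b * M)
    (hc0 : 0 < c) (hc : c < 4 - 3 * b) :
    (1 - c) / (b - c) ≤
      (volume {w ∈ closedBall z₀ r | c * M ≤ u w}).toReal /
        (volume (closedBall z₀ r)).toReal
    ∧ (3 : ℝ) / 4 < (1 - c) / (b - c) :=
  stmt5_general u z₀ r M b c hr V hDV hcont hsub hM hM0 hb1 hub hc
end
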